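/- arXiv:2011.03223 — 2 statements merged into one kernel-verified Lean document; each statement's English description precedes it below -/
import Mathlib

section
/- Let β > 1, 0 < σ² < 1 with β + σ² > 2 and σ² < β/(2β−1). Define v = (β − σ²)/√(2(β−1)(1−σ²)) and φ(u) = βu + (1−u) − v²/(2(σ²u + 1−u)) for u ∈ [0,1]. Then φ is concave on [0,1], attains its maximum at p = (σ² + β − 2)/(2(β−1)(1−σ²)), and φ(p) = 0. -/
/-!
Write `D(u) = σ2 * u + 1 - u`, which is affine in `u` and positive on `[0, 1]`. Concavity holds
because `φ` is affine minus a nonnegative multiple of `1 / D`, and `1 / D` is convex.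
With `k = (β - 1) / (1 - σ2)` and `m = (β - σ2) / (2 * (β - 1))` one has
`φ(u) = 2 * k * m - k * (D(u) + m² / D(u))`, so AM-GM (`D + m² / D ≥ 2 * m`) bounds `φ` by `0`,
with equality exactly when `D(u) = m`, that is at `u = p`.
-/

open Set

theorem convexOn_inv_add_mul {d e : ℝ} {s : Set ℝ} (hs : Convex ℝ s)
    (hpos : ∀ u ∈ s, 0 < d + e * u) : ConvexOn ℝ s fun u => (d + e * u)⁻¹ := by
  let g : ℝ →ᵃ[ℝ] ℝ := AffineMap.const ℝ ℝ d + (LinearMap.lsmul ℝ ℝ e).toAffineMap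
  have h := ((convexOn_zpow (𝕜 := ℝ) (-1)).comp_affineMap g).subset (fun u hu => hpos u hu) hs
  simpa [g, Function.comp_def] using h

theorem concaveOn_add_mul_sub_div_add_mul {a b c d e : ℝ} {s : Set ℝ} (hs : Convex ℝ s)
    (hc : 0 ≤ c) (hpos : ∀ u ∈ s, 0 < d + e * u) :
    ConcaveOn ℝ s fun u => a + b * u - c / (d + e * u) := by
  have hlin : ConcaveOn ℝ s fun u => a + b * u :=
    (concaveOn_const a hs).add ((LinearMap.lsmul ℝ ℝ b).concaveOn hs)
  refine (hlin.sub ((convexOn_inv_add_mul hs hpos).smul hc)).congr fun u _ => ?_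
  simp [div_eq_mul_inv]

theorem two_mul_le_add_sq_div {m D : ℝ} (hD : 0 < D) : 2 * m ≤ D + m ^ 2 / D := by
  have hsq : 0 ≤ (D - m) ^ 2 / D := by positivity
  have hexp : (D - m) ^ 2 / D = D + m ^ 2 / D - 2 * m := by field_simp; ring
  linarith

theorem rate_function_concave_max_general (β σ2 v p : ℝ) (φ : ℝ → ℝ)
    (hβ : 1 < β) (hσ0 : 0 < σ2) (hσ1 : σ2 < 1)
    (hv : v = (β - σ2) / Real.sqrt (2 * (β - 1) * (1 - σ2)))
    (hp : p = (σ2 + β - 2) / (2 * (β - 1) * (1 - σ2)))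
    (hφ : ∀ u, φ u = β * u + (1 - u) - v ^ 2 / (2 * (σ2 * u + 1 - u))) :
    ConcaveOn ℝ (Set.Icc 0 1) φ ∧ (∀ u ∈ Set.Icc (0 : ℝ) 1, φ u ≤ φ p) ∧ φ p = 0 := by
  have hβ1 : 0 < β - 1 := sub_pos.2 hβ
  have hσ1' : 0 < 1 - σ2 := sub_pos.2 hσ1
  have hD : ∀ u ∈ Icc (0 : ℝ) 1, 0 < σ2 * u + 1 - u := fun u ⟨h0, h1⟩ => by nlinarith
  have hv2 : v ^ 2 = (β - σ2) ^ 2 / (2 * (β - 1) * (1 - σ2)) := by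
    rw [hv, div_pow, Real.sq_sqrt (by positivity)]
  set k := (β - 1) / (1 - σ2) with hk
  set m := (β - σ2) / (2 * (β - 1)) with hm
  have hc : v ^ 2 / 2 = k * m ^ 2 := by
    rw [hv2, hk, hm]; field_simp
  have hφD : ∀ u, φ u = 2 * k * m - k * ((σ2 * u + 1 - u) + m ^ 2 / (σ2 * u + 1 - u)) := by
    intro u
    have hlin : β * u + (1 - u) = 2 * k * m - k * (σ2 * u + 1 - u) := by
      rw [hk, hm]; field_simp; ring
    rw [hφ, ← div_div, hc, hlin]
    ring
  have hDp : σ2 * p + 1 - p = m := by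
    rw [hp, hm]; field_simp; ring
  have hm0 : 0 < m := div_pos (by linarith) (by positivity)
  have hφp : φ p = 0 := by
    rw [hφD p, hDp]; field_simp; ring
  refine ⟨?_, fun u hu => ?_, hφp⟩
  · refine (concaveOn_add_mul_sub_div_add_mul (a := 1) (b := β - 1) (d := 2) (e := 2 * (σ2 - 1))
      (convex_Icc 0 1) (sq_nonneg v) fun u hu => by linarith [hD u hu]).congr fun u _ => ?_
    rw [hφ]; ring_nf
  · rw [hφp, hφD u, sub_nonpos, mul_comm 2 k, mul_assoc]
    exact mul_le_mul_of_nonneg_left (two_mul_le_add_sq_div (hD u hu)) (div_pos hβ1 hσ1').le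

/-- The rate function `φ(u) = βu + (1−u) − v²/(2(σ²u+1−u))` is concave on `[0,1]`,
attains its maximum on `[0,1]` at `p = (σ²+β−2)/(2(β−1)(1−σ²))`, and `φ(p) = 0`. -/
theorem rate_function_concave_max (β σ2 v p : ℝ) (φ : ℝ → ℝ)
    (hβ : 1 < β) (hσ0 : 0 < σ2) (hσ1 : σ2 < 1)
    (h1 : 2 < β + σ2) (h2 : σ2 < β / (2 * β - 1))
    (hv : v = (β - σ2) / Real.sqrt (2 * (β - 1) * (1 - σ2)))
    (hp : p = (σ2 + β - 2) / (2 * (β - 1) * (1 - σ2)))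
    (hφ : ∀ u, φ u = β * u + (1 - u) - v ^ 2 / (2 * (σ2 * u + 1 - u))) :
    ConcaveOn ℝ (Set.Icc 0 1) φ ∧ (∀ u ∈ Set.Icc (0 : ℝ) 1, φ u ≤ φ p) ∧ φ p = 0 :=
  rate_function_concave_max_general β σ2 v p φ hβ hσ0 hσ1 hv hp hφ
end

section
/- Let β > 1, 0 < σ² < 1 with β + σ² > 2 and σ² < β/(2β−1). Define v and φ as before: v = (β−σ²)/√(2(β−1)(1−σ²)), φ(u) = βu + 1−u − v²/(2(σ²u+1−u)), and p = (σ²+β−2)/(2(β−1)(1−σ²)). Then there exists δ > 0 such that φ(u) ≤ −δ(u−p)² for all u ∈ [0,1]. -/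
/-! Completing the square shows `φ(u) = -(β-1)(1-σ²)(u-p)² / (σ²u+1-u)`. On `[0,1]` the
denominator is a convex combination of `σ²` and `1`, hence lies in `(0,1]`, so one may take
`δ = (β-1)(1-σ²)`. -/

lemma neg_mul_sq_div_le_neg_mul_sq {c w : ℝ} (x : ℝ) (hc : 0 ≤ c) (hw0 : 0 < w) (hw1 : w ≤ 1) :
    -c * x ^ 2 / w ≤ -c * x ^ 2 := by
  rw [neg_mul, neg_div, neg_le_neg_iff]
  exact le_div_self (by positivity) hw0 hw1

lemma affine_weight_mem_Ioc {s u : ℝ} (hs0 : 0 < s) (hs1 : s ≤ 1) (hu : u ∈ Set.Icc (0 : ℝ) 1) :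
    0 < s * u + 1 - u ∧ s * u + 1 - u ≤ 1 := by
  obtain ⟨hu0, hu1⟩ := hu
  constructor <;> nlinarith

lemma rate_function_eq_neg_sq_div {β s : ℝ} (u : ℝ) (hβ : β ≠ 1) (hs : s ≠ 1)
    (hw : s * u + 1 - u ≠ 0) :
    β * u + (1 - u) - (β - s) ^ 2 / (2 * (β - 1) * (1 - s)) / (2 * (s * u + 1 - u)) =
      -((β - 1) * (1 - s)) * (u - (s + β - 2) / (2 * (β - 1) * (1 - s))) ^ 2 /
        (s * u + 1 - u) := by
  have hβ' : β - 1 ≠ 0 := sub_ne_zero.mpr hβ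
  have hs' : 1 - s ≠ 0 := sub_ne_zero.mpr hs.symm
  rw [show s * u + 1 - u = 1 - u + u * s by ring] at hw ⊢
  field_simp
  ring

theorem rate_function_quadratic_bound_general (β σ2 v p : ℝ) (φ : ℝ → ℝ)
    (hβ : 1 < β) (hσ0 : 0 < σ2) (hσ1 : σ2 < 1)
    (hv : v = (β - σ2) / Real.sqrt (2 * (β - 1) * (1 - σ2)))
    (hp : p = (σ2 + β - 2) / (2 * (β - 1) * (1 - σ2)))
    (hφ : ∀ u, φ u = β * u + (1 - u) - v ^ 2 / (2 * (σ2 * u + 1 - u))) :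
    ∃ δ > 0, ∀ u ∈ Set.Icc (0 : ℝ) 1, φ u ≤ -δ * (u - p) ^ 2 := by
  have hc : 0 < (β - 1) * (1 - σ2) := mul_pos (sub_pos.mpr hβ) (sub_pos.mpr hσ1)
  have hv2 : v ^ 2 = (β - σ2) ^ 2 / (2 * (β - 1) * (1 - σ2)) := by
    rw [hv, div_pow, Real.sq_sqrt (by linarith)]
  refine ⟨(β - 1) * (1 - σ2), hc, fun u hu => ?_⟩
  obtain ⟨hw0, hw1⟩ := affine_weight_mem_Ioc hσ0 hσ1.le hu
  rw [hφ, hv2, rate_function_eq_neg_sq_div u hβ.ne' hσ1.ne hw0.ne', ← hp]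
  exact neg_mul_sq_div_le_neg_mul_sq _ hc.le hw0 hw1

/-- There exists `δ > 0` with `φ(u) ≤ −δ(u−p)²` on `[0,1]`, where
`φ(u) = βu + 1−u − v²/(2(σ²u+1−u))` and `p` is the maximizer of `φ`. -/
theorem rate_function_quadratic_bound (β σ2 v p : ℝ) (φ : ℝ → ℝ)
    (hβ : 1 < β) (hσ0 : 0 < σ2) (hσ1 : σ2 < 1)
    (h1 : 2 < β + σ2) (h2 : σ2 < β / (2 * β - 1))
    (hv : v = (β - σ2) / Real.sqrt (2 * (β - 1) * (1 - σ2)))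
    (hp : p = (σ2 + β - 2) / (2 * (β - 1) * (1 - σ2)))
    (hφ : ∀ u, φ u = β * u + (1 - u) - v ^ 2 / (2 * (σ2 * u + 1 - u))) :
    ∃ δ > 0, ∀ u ∈ Set.Icc (0 : ℝ) 1, φ u ≤ -δ * (u - p) ^ 2 :=
  rate_function_quadratic_bound_general β σ2 v p φ hβ hσ0 hσ1 hv hp hφ
end
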